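/- Let F_1, …, F_n be pairwise disjoint matchings in a graph, each of size n (disjoint as edge sets: F_i ∩ F_j = ∅ for i ≠ j). Then there exists a rainbow matching of size at least (3/4)n − 9/2. -/

import Mathlib

/-!
Let `M` be a maximum rainbow matching, with `r` edges and vertex set `W` (`|W| ≤ 2r`), and let
`m = n - r` be the number of colours it misses. Every edge of a missing colour meets `W`, so such
a colour has at least `2m` edges with exactly one end in `W`; counting these pendant edges at
their ends gives `2m² ≤ ∑_{v ∈ W} p(v)`, where `p(v)` is the number of missing colours pendant
at `v`. Exchanging an edge of `M` for two pendant edges shows that if one end of an edge of `M`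
has `p ≥ 3`, the other end has `p = 0`. Call an edge of `M` rich if an end has `p ≥ 4`: a rich
edge contributes at most `m` to the sum and any other edge at most `4`, so with `k` rich edges
`2m² ≤ km + 4(r - k)`. Exchanging two rich edges for three edges shows that no edge of a missing
colour joins the empty ends of two rich edges; the `n` disjoint edges of that colour therefore
need `n` vertices of `W` besides these `k` ends, so `n + k ≤ 2r`. The two inequalities give
`3m ≤ r + 12`, that is `r ≥ 3n/4 - 3`.
-/
open Finset Function

section PairwiseDisjoint

variable {α β : Type*} [DecidableEq β] {s : Finset α} {f : α → Finset β}

theorem Set.PairwiseDisjoint.sum_card_inter_le (hf : (s : Set α).PairwiseDisjoint f)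
    (T : Finset β) : ∑ a ∈ s, #(f a ∩ T) ≤ #T := by
  rw [← card_biUnion (hf.mono_on fun a _ => Finset.inter_subset_left (s₁ := f a))]
  exact Finset.card_le_card (biUnion_subset.2 fun a _ => Finset.inter_subset_right (s₁ := f a))

theorem Set.PairwiseDisjoint.card_le_of_inter_nonempty (hf : (s : Set α).PairwiseDisjoint f)
    {T : Finset β} (hT : ∀ a ∈ s, (f a ∩ T).Nonempty) : #s ≤ #T :=
  calc #s = ∑ _a ∈ s, 1 := card_eq_sum_ones s
    _ ≤ ∑ a ∈ s, #(f a ∩ T) := sum_le_sum fun a ha => (hT a ha).card_pos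
    _ ≤ #T := hf.sum_card_inter_le T

end PairwiseDisjoint

section RainbowMatching

variable {V ι : Type*}

structure IsMatching (M : Finset (Sym2 V)) : Prop where
  not_isDiag : ∀ e ∈ M, ¬e.IsDiag
  eq_of_mem : ∀ e ∈ M, ∀ f ∈ M, ∀ v ∈ e, v ∈ f → e = f

theorem IsMatching.pairwiseDisjoint [DecidableEq V] {M : Finset (Sym2 V)} (hM : IsMatching M) :
    (M : Set (Sym2 V)).PairwiseDisjoint Sym2.toFinset := fun e he f hf hef =>
  disjoint_left.2 fun v hve hvf =>
    hef (hM.eq_of_mem e he f hf v (Sym2.mem_toFinset.1 hve) (Sym2.mem_toFinset.1 hvf))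

open Classical in
noncomputable def pendantVerts (M : Finset (Sym2 V)) (W : Finset V) : Finset V :=
  {v ∈ W | ∃ a ∉ W, s(v, a) ∈ M}

theorem mem_pendantVerts {M : Finset (Sym2 V)} {W : Finset V} {v : V} :
    v ∈ pendantVerts M W ↔ v ∈ W ∧ ∃ a ∉ W, s(v, a) ∈ M := by
  simp [pendantVerts]

/-- An edge with one end in `W` has its other end in `W` or is pendant there, so it meets `W`
and `pendantVerts M W` in at least two vertices altogether. -/
theorem IsMatching.two_mul_card_le [DecidableEq V] {M : Finset (Sym2 V)} {W : Finset V}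
    (hM : IsMatching M) (hW : ∀ e ∈ M, ∃ v ∈ e, v ∈ W) :
    2 * #M ≤ #W + #(pendantVerts M W) := by
  have hedge : ∀ e ∈ M, 2 ≤ #(e.toFinset ∩ W) + #(e.toFinset ∩ pendantVerts M W) := by
    intro e he
    obtain ⟨v, hve, hvW⟩ := hW e he
    obtain ⟨w, rfl⟩ := Sym2.mem_iff_exists.1 hve
    have hvw : v ≠ w := fun h => hM.not_isDiag _ he (Sym2.mk_isDiag_iff.2 h)
    rw [Sym2.toFinset_mk_eq]
    by_cases hwW : w ∈ W
    · rw [inter_eq_left.2 (insert_subset hvW (singleton_subset_iff.2 hwW)), card_pair hvw]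
      omega
    · have hvP : v ∈ pendantVerts M W := mem_pendantVerts.2 ⟨hvW, w, hwW, he⟩
      have h₁ : 0 < #({v, w} ∩ W) := card_pos.2 ⟨v, by simp [hvW]⟩
      have h₂ : 0 < #({v, w} ∩ pendantVerts M W) := card_pos.2 ⟨v, by simp [hvP]⟩
      omega
  calc 2 * #M = ∑ e ∈ M, 2 := by rw [sum_const, smul_eq_mul, mul_comm]
    _ ≤ ∑ e ∈ M, (#(e.toFinset ∩ W) + #(e.toFinset ∩ pendantVerts M W)) := sum_le_sum hedge
    _ ≤ #W + #(pendantVerts M W) := by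
      rw [sum_add_distrib]
      exact add_le_add (hM.pairwiseDisjoint.sum_card_inter_le W)
        (hM.pairwiseDisjoint.sum_card_inter_le _)

/-- `c i` is the edge of colour `i`, for `i ∈ I`; the values of `c` outside `I` are irrelevant. -/
structure IsRainbowMatching (F : ι → Finset (Sym2 V)) (I : Finset ι) (c : ι → Sym2 V) : Prop where
  mem : ∀ i ∈ I, c i ∈ F i
  disjoint : ∀ i ∈ I, ∀ j ∈ I, i ≠ j → ∀ v, v ∈ c i → v ∉ c j

theorem IsRainbowMatching.mono {F : ι → Finset (Sym2 V)} {I : Finset ι} {c : ι → Sym2 V}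
    (h : IsRainbowMatching F I c) {J : Finset ι} (hJ : J ⊆ I) : IsRainbowMatching F J c :=
  ⟨fun i hi => h.mem i (hJ hi), fun i hi j hj => h.disjoint i (hJ hi) j (hJ hj)⟩

structure IsMaxRainbowMatching (F : ι → Finset (Sym2 V)) (I : Finset ι) (c : ι → Sym2 V) : Prop
    extends IsRainbowMatching F I c where
  card_le : ∀ (J : Finset ι) (d : ι → Sym2 V), IsRainbowMatching F J d → #J ≤ #I

theorem exists_isMaxRainbowMatching [Fintype ι] [Nonempty V] (F : ι → Finset (Sym2 V)) :
    ∃ I c, IsMaxRainbowMatching F I c := by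
  let sizes : Set ℕ := {k | ∃ I c, IsRainbowMatching F I c ∧ #I = k}
  have hne : sizes.Nonempty :=
    ⟨0, ∅, fun _ => s(Classical.arbitrary V, Classical.arbitrary V), ⟨by simp, by simp⟩, card_empty⟩
  have hbdd : BddAbove sizes := ⟨Fintype.card ι, by rintro _ ⟨I, c, -, rfl⟩; exact card_le_univ I⟩
  obtain ⟨I, c, hIc, hcard⟩ := Nat.sSup_mem hne hbdd
  exact ⟨I, c, { hIc with card_le := fun J d hJd => hcard ▸ le_csSup hbdd ⟨J, d, hJd, rfl⟩ }⟩

def matchingVerts [DecidableEq V] (I : Finset ι) (c : ι → Sym2 V) : Finset V :=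
  I.biUnion fun i => (c i).toFinset

section MatchingVerts

variable [DecidableEq V] {F : ι → Finset (Sym2 V)} {I : Finset ι} {c : ι → Sym2 V} {v : V}

theorem mem_matchingVerts : v ∈ matchingVerts I c ↔ ∃ i ∈ I, v ∈ c i := by
  simp [matchingVerts]

theorem card_matchingVerts_le (I : Finset ι) (c : ι → Sym2 V) : #(matchingVerts I c) ≤ 2 * #I :=
  calc #(matchingVerts I c) ≤ ∑ i ∈ I, #(c i).toFinset := card_biUnion_le
    _ ≤ ∑ i ∈ I, 2 := sum_le_sum fun i _ => by rw [Sym2.card_toFinset]; split_ifs <;> omega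
    _ = 2 * #I := by rw [sum_const, smul_eq_mul, mul_comm]

theorem mem_matchingVerts_insert [DecidableEq ι] {i : ι} {e : Sym2 V} (hi : i ∉ I) :
    v ∈ matchingVerts (insert i I) (Function.update c i e) ↔ v ∈ e ∨ v ∈ matchingVerts I c := by
  simp only [mem_matchingVerts, exists_mem_insert, Function.update_self]
  refine or_congr_right (exists_congr fun j => and_congr_right fun hj => ?_)
  rw [Function.update_of_ne (ne_of_mem_of_not_mem hj hi)]

namespace IsRainbowMatching

theorem pairwiseDisjoint (h : IsRainbowMatching F I c) :
    (I : Set ι).PairwiseDisjoint fun i => (c i).toFinset := fun i hi j hj hij =>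
  disjoint_left.2 fun v hvi hvj =>
    h.disjoint i hi j hj hij v (Sym2.mem_toFinset.1 hvi) (Sym2.mem_toFinset.1 hvj)

theorem mem_matchingVerts_erase [DecidableEq ι] (h : IsRainbowMatching F I c) {ℓ : ι}
    (hℓ : ℓ ∈ I) : v ∈ matchingVerts (I.erase ℓ) c ↔ v ∈ matchingVerts I c ∧ v ∉ c ℓ := by
  simp only [mem_matchingVerts, mem_erase]
  constructor
  · rintro ⟨p, ⟨hpℓ, hp⟩, hvp⟩
    exact ⟨⟨p, hp, hvp⟩, h.disjoint p hp ℓ hℓ hpℓ v hvp⟩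
  · rintro ⟨⟨p, hp, hvp⟩, hvℓ⟩
    exact ⟨p, ⟨fun hpℓ => hvℓ (hpℓ ▸ hvp), hp⟩, hvp⟩

theorem insert [DecidableEq ι] (h : IsRainbowMatching F I c) {i : ι} {e : Sym2 V} (hi : i ∉ I)
    (he : e ∈ F i) (hfree : ∀ v ∈ e, v ∉ matchingVerts I c) :
    IsRainbowMatching F (insert i I) (Function.update c i e) := by
  have hcases : ∀ p, p = i ∨ p ∈ I → ∀ v ∈ Function.update c i e p,
      (p = i ∧ v ∈ e) ∨ (p ∈ I ∧ v ∈ c p) := by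
    rintro p hp v hvp
    rcases hp with rfl | hp
    · exact .inl ⟨rfl, by simpa using hvp⟩
    · rw [Function.update_of_ne (ne_of_mem_of_not_mem hp hi)] at hvp
      exact .inr ⟨hp, hvp⟩
  refine ⟨fun p hp => ?_, fun p hp q hq hpq v hvp hvq => ?_⟩
  · rcases mem_insert.1 hp with rfl | hp
    · simpa using he
    · rw [Function.update_of_ne (ne_of_mem_of_not_mem hp hi)]
      exact h.mem p hp
  · rcases hcases p (mem_insert.1 hp) v hvp with ⟨rfl, hve⟩ | ⟨hpI, hvcp⟩ <;>
      rcases hcases q (mem_insert.1 hq) v hvq with ⟨rfl, hve'⟩ | ⟨hqI, hvcq⟩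
    · exact hpq rfl
    · exact hfree v hve (mem_matchingVerts.2 ⟨q, hqI, hvcq⟩)
    · exact hfree v hve' (mem_matchingVerts.2 ⟨p, hpI, hvcp⟩)
    · exact h.disjoint p hpI q hqI hpq v hvcp hvcq

end IsRainbowMatching

end MatchingVerts

namespace IsMaxRainbowMatching

variable [DecidableEq ι] [DecidableEq V] {F : ι → Finset (Sym2 V)} {I : Finset ι}
  {c : ι → Sym2 V}

theorem exists_mem_matchingVerts (hM : IsMaxRainbowMatching F I c) {i : ι} {e : Sym2 V}
    (hi : i ∉ I) (he : e ∈ F i) : ∃ v ∈ e, v ∈ matchingVerts I c := by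
  by_contra! h
  have := hM.card_le _ _ (hM.insert hi he h)
  rw [card_insert_of_notMem hi] at this
  omega

/-- Otherwise the edge `uv` of the matching could be exchanged for `ua` and `vb`. -/
theorem pendant_ends_eq (hM : IsMaxRainbowMatching F I c) {ℓ i j : ι} {u v a b : V}
    (hℓ : ℓ ∈ I) (hu : u ∈ c ℓ) (hv : v ∈ c ℓ) (huv : u ≠ v) (hi : i ∉ I) (hj : j ∉ I)
    (hij : i ≠ j) (ha : a ∉ matchingVerts I c) (hb : b ∉ matchingVerts I c)
    (hua : s(u, a) ∈ F i) (hvb : s(v, b) ∈ F j) : a = b := by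
  by_contra hab
  have huW := mem_matchingVerts.2 ⟨ℓ, hℓ, hu⟩
  have hvW := mem_matchingVerts.2 ⟨ℓ, hℓ, hv⟩
  have hjI : j ∉ I.erase ℓ := fun h => hj (mem_of_mem_erase h)
  have h₁ := (hM.mono (erase_subset ℓ I)).insert hjI hvb (by
    simp only [Sym2.mem_iff, forall_eq_or_imp, forall_eq, hM.mem_matchingVerts_erase hℓ]
    grind)
  have hiJ : i ∉ insert j (I.erase ℓ) := by simp [hij, hi]
  have h₂ := h₁.insert hiJ hua (by
    simp only [Sym2.mem_iff, forall_eq_or_imp, forall_eq, mem_matchingVerts_insert hjI,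
      hM.mem_matchingVerts_erase hℓ]
    grind)
  have := hM.card_le _ _ h₂
  rw [card_insert_of_notMem hiJ, card_insert_of_notMem hjI,
    card_erase_of_mem hℓ] at this
  have := card_pos.2 ⟨ℓ, hℓ⟩
  omega

/-- Otherwise the edges `x u₁` and `y u₂` of the matching could be exchanged for `xy`, `u₁ a`
and `u₂ b`. -/
theorem cross_pendant_ends_eq (hM : IsMaxRainbowMatching F I c) {ℓ₁ ℓ₂ t i j : ι}
    {x y u₁ u₂ a b : V} (hℓ₁ : ℓ₁ ∈ I) (hℓ₂ : ℓ₂ ∈ I) (hℓ : ℓ₁ ≠ ℓ₂) (hx : x ∈ c ℓ₁)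
    (hu₁ : u₁ ∈ c ℓ₁) (hxu₁ : x ≠ u₁) (hy : y ∈ c ℓ₂) (hu₂ : u₂ ∈ c ℓ₂) (hyu₂ : y ≠ u₂)
    (ht : t ∉ I) (hi : i ∉ I) (hj : j ∉ I) (hti : t ≠ i) (htj : t ≠ j) (hij : i ≠ j)
    (ha : a ∉ matchingVerts I c) (hb : b ∉ matchingVerts I c) (hxy : s(x, y) ∈ F t)
    (hu₁a : s(u₁, a) ∈ F i) (hu₂b : s(u₂, b) ∈ F j) : a = b := by
  by_contra hab
  have hxW := mem_matchingVerts.2 ⟨ℓ₁, hℓ₁, hx⟩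
  have hyW := mem_matchingVerts.2 ⟨ℓ₂, hℓ₂, hy⟩
  have hu₁W := mem_matchingVerts.2 ⟨ℓ₁, hℓ₁, hu₁⟩
  have hu₂W := mem_matchingVerts.2 ⟨ℓ₂, hℓ₂, hu₂⟩
  have hx₂ : x ∉ c ℓ₂ := hM.disjoint ℓ₁ hℓ₁ ℓ₂ hℓ₂ hℓ x hx
  have hu₁₂ : u₁ ∉ c ℓ₂ := hM.disjoint ℓ₁ hℓ₁ ℓ₂ hℓ₂ hℓ u₁ hu₁
  set J := (I.erase ℓ₁).erase ℓ₂
  have hJ : IsRainbowMatching F J c := hM.mono ((erase_subset _ _).trans (erase_subset _ _))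
  have hJverts : ∀ w, w ∈ matchingVerts J c ↔
      w ∈ matchingVerts I c ∧ w ∉ c ℓ₁ ∧ w ∉ c ℓ₂ := fun w => by
    rw [(hM.mono (erase_subset _ _)).mem_matchingVerts_erase (mem_erase.2 ⟨hℓ.symm, hℓ₂⟩),
      hM.mem_matchingVerts_erase hℓ₁, and_assoc]
  have htJ : t ∉ J := by simp [J, ht]
  have hiJ : i ∉ insert t J := by simp [J, hti.symm, hi]
  have hjJ : j ∉ insert i (insert t J) := by simp [J, htj.symm, hij.symm, hj]
  have h₁ := hJ.insert htJ hxy (by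
    simp only [Sym2.mem_iff, forall_eq_or_imp, forall_eq, hJverts]
    grind)
  have h₂ := h₁.insert hiJ hu₁a (by
    simp only [Sym2.mem_iff, forall_eq_or_imp, forall_eq, mem_matchingVerts_insert htJ, hJverts]
    grind)
  have h₃ := h₂.insert hjJ hu₂b (by
    simp only [Sym2.mem_iff, forall_eq_or_imp, forall_eq, mem_matchingVerts_insert hiJ,
      mem_matchingVerts_insert htJ, hJverts]
    grind)
  have := hM.card_le _ _ h₃
  rw [card_insert_of_notMem hjJ, card_insert_of_notMem hiJ, card_insert_of_notMem htJ,
    card_erase_of_mem (mem_erase.2 ⟨hℓ.symm, hℓ₂⟩), card_erase_of_mem hℓ₁] at this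
  have := one_lt_card.2 ⟨ℓ₁, hℓ₁, ℓ₂, hℓ₂, hℓ⟩
  omega

end IsMaxRainbowMatching

section Pendant

variable [Fintype ι] [DecidableEq ι] [DecidableEq V]

open Classical in
noncomputable def pendantColours (F : ι → Finset (Sym2 V)) (I : Finset ι) (c : ι → Sym2 V)
    (v : V) : Finset ι :=
  {i ∈ Iᶜ | v ∈ pendantVerts (F i) (matchingVerts I c)}

open Classical in
noncomputable def richColours (F : ι → Finset (Sym2 V)) (I : Finset ι) (c : ι → Sym2 V) :
    Finset ι :=
  {ℓ ∈ I | ∃ w ∈ c ℓ, 4 ≤ #(pendantColours F I c w)}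

variable {F : ι → Finset (Sym2 V)} {I : Finset ι} {c : ι → Sym2 V}

theorem mem_pendantColours {v : V} {i : ι} :
    i ∈ pendantColours F I c v ↔
      i ∉ I ∧ v ∈ matchingVerts I c ∧ ∃ a ∉ matchingVerts I c, s(v, a) ∈ F i := by
  simp [pendantColours, mem_pendantVerts]

theorem mem_richColours {ℓ : ι} :
    ℓ ∈ richColours F I c ↔ ℓ ∈ I ∧ ∃ w ∈ c ℓ, 4 ≤ #(pendantColours F I c w) := by
  simp [richColours]

theorem richColours_subset : richColours F I c ⊆ I := fun _ hℓ => (mem_richColours.1 hℓ).1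

theorem card_pendantColours_le (v : V) : #(pendantColours F I c v) ≤ #Iᶜ :=
  card_le_card (filter_subset _ _)

/-- Two colours pendant at `v` have different outer ends, so one of them avoids `a`. -/
theorem exists_pendant_ne (hdisj : Pairwise (Disjoint on F)) {v : V} (a : V) {X : Finset ι}
    (hX : #X + 2 ≤ #(pendantColours F I c v)) :
    ∃ j ∉ X, j ∉ I ∧ ∃ b ∉ matchingVerts I c, b ≠ a ∧ s(v, b) ∈ F j := by
  obtain ⟨j₁, hj₁, j₂, hj₂, hj⟩ :=
    one_lt_card.1 (lt_of_lt_of_le (by omega) (le_card_sdiff X (pendantColours F I c v)))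
  obtain ⟨hj₁S, hj₁X⟩ := mem_sdiff.1 hj₁
  obtain ⟨hj₂S, hj₂X⟩ := mem_sdiff.1 hj₂
  obtain ⟨hj₁I, -, b₁, hb₁, hvb₁⟩ := mem_pendantColours.1 hj₁S
  obtain ⟨hj₂I, -, b₂, hb₂, hvb₂⟩ := mem_pendantColours.1 hj₂S
  by_cases hb₁a : b₁ = a
  · refine ⟨j₂, hj₂X, hj₂I, b₂, hb₂, fun hb₂a => ?_, hvb₂⟩
    subst hb₁a hb₂a
    exact disjoint_left.1 (hdisj hj) hvb₁ hvb₂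
  · exact ⟨j₁, hj₁X, hj₁I, b₁, hb₁, hb₁a, hvb₁⟩

end Pendant

namespace IsMaxRainbowMatching

variable [Fintype ι] [DecidableEq ι] [DecidableEq V] {F : ι → Finset (Sym2 V)} {I : Finset ι}
  {c : ι → Sym2 V}

theorem pendantColours_eq_empty (hM : IsMaxRainbowMatching F I c)
    (hdisj : Pairwise (Disjoint on F)) {ℓ : ι} {u v : V} (hℓ : ℓ ∈ I) (hu : u ∈ c ℓ)
    (hv : v ∈ c ℓ) (huv : u ≠ v) (h3 : 3 ≤ #(pendantColours F I c u)) :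
    pendantColours F I c v = ∅ := by
  refine eq_empty_iff_forall_notMem.2 fun j hj => ?_
  obtain ⟨hjI, -, b, hb, hvb⟩ := mem_pendantColours.1 hj
  obtain ⟨i, hij, hiI, a, ha, hab, hua⟩ := exists_pendant_ne hdisj b (X := {j}) (by simpa)
  exact hab (hM.pendant_ends_eq hℓ hu hv huv hiI hjI (by simpa using hij) ha hb hua hvb)

/-- If one end has three pendant colours, the other end has none. -/
theorem card_add_card_pendantColours_le (hM : IsMaxRainbowMatching F I c)
    (hdisj : Pairwise (Disjoint on F)) {ℓ : ι} {u v : V} (hℓ : ℓ ∈ I) (hu : u ∈ c ℓ)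
    (hv : v ∈ c ℓ) (huv : u ≠ v) :
    #(pendantColours F I c u) + #(pendantColours F I c v) ≤
      if ℓ ∈ richColours F I c then #Iᶜ else 4 := by
  wlog hvu : #(pendantColours F I c v) ≤ #(pendantColours F I c u) generalizing u v
  · rw [add_comm]
    exact this hv hu huv.symm (by omega)
  have hrich : ℓ ∈ richColours F I c ↔ 4 ≤ #(pendantColours F I c u) := by
    simp only [mem_richColours, hℓ, true_and, (Sym2.mem_and_mem_iff huv).1 ⟨hu, hv⟩,
      Sym2.mem_iff, exists_eq_or_imp, exists_eq_left]
    omega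
  rcases lt_or_ge #(pendantColours F I c u) 3 with h3 | h3
  · rw [if_neg (hrich.not.2 (by omega))]
    omega
  · rw [hM.pendantColours_eq_empty hdisj hℓ hu hv huv h3, card_empty, add_zero]
    split_ifs with hr
    · exact card_pendantColours_le u
    · have := hrich.not.1 hr
      omega

theorem sum_card_pendantColours_le (hM : IsMaxRainbowMatching F I c)
    (hF : ∀ i, IsMatching (F i)) (hdisj : Pairwise (Disjoint on F)) {ℓ : ι} (hℓ : ℓ ∈ I) :
    ∑ v ∈ (c ℓ).toFinset, #(pendantColours F I c v) ≤
      if ℓ ∈ richColours F I c then #Iᶜ else 4 := by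
  obtain ⟨u, v, hcℓ⟩ : ∃ u v, c ℓ = s(u, v) := Sym2.exists.1 ⟨c ℓ, rfl⟩
  have huv : u ≠ v := fun h => (hF ℓ).not_isDiag _ (hM.mem ℓ hℓ) (hcℓ ▸ Sym2.mk_isDiag_iff.2 h)
  rw [hcℓ, Sym2.toFinset_mk_eq, sum_pair huv]
  exact hM.card_add_card_pendantColours_le hdisj hℓ (by simp [hcℓ]) (by simp [hcℓ]) huv

/-- Double counting the pair (missing colour, vertex of the matching at which it is pendant). -/
theorem two_mul_sq_le_sum_card_pendantColours (hM : IsMaxRainbowMatching F I c)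
    (hF : ∀ i, IsMatching (F i)) (hsize : ∀ i, Fintype.card ι ≤ #(F i)) :
    2 * #Iᶜ * #Iᶜ ≤ ∑ v ∈ matchingVerts I c, #(pendantColours F I c v) := by
  have hfree : ∀ i ∈ Iᶜ, 2 * #Iᶜ ≤ #(pendantVerts (F i) (matchingVerts I c)) := by
    intro i hi
    have := (hF i).two_mul_card_le fun e he => hM.exists_mem_matchingVerts (mem_compl.1 hi) he
    have := card_matchingVerts_le I c
    have := hsize i
    have := card_compl_add_card I
    omega
  calc 2 * #Iᶜ * #Iᶜ = ∑ i ∈ Iᶜ, 2 * #Iᶜ := by rw [sum_const, smul_eq_mul, mul_comm]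
    _ ≤ ∑ i ∈ Iᶜ, #(pendantVerts (F i) (matchingVerts I c)) := sum_le_sum hfree
    _ = ∑ v ∈ matchingVerts I c, #(pendantColours F I c v) := by
      rw [eq_comm]
      convert sum_card_bipartiteAbove_eq_sum_card_bipartiteBelow
        (fun v i => v ∈ pendantVerts (F i) (matchingVerts I c)) using 2
      · rfl
      · rw [bipartiteBelow, filter_mem_eq_inter,
          inter_eq_right.2 fun v hv => (mem_pendantVerts.1 hv).1]

theorem two_mul_sq_add_le (hM : IsMaxRainbowMatching F I c) (hF : ∀ i, IsMatching (F i))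
    (hdisj : Pairwise (Disjoint on F)) (hsize : ∀ i, Fintype.card ι ≤ #(F i)) :
    2 * #Iᶜ * #Iᶜ + 4 * #(richColours F I c) ≤ #(richColours F I c) * #Iᶜ + 4 * #I := by
  have hK : {ℓ ∈ I | ℓ ∈ richColours F I c} = richColours F I c :=
    filter_mem_eq_inter.trans (inter_eq_right.2 richColours_subset)
  have hsplit := card_filter_add_card_filter_not (s := I) (· ∈ richColours F I c)
  have hweights : ∑ v ∈ matchingVerts I c, #(pendantColours F I c v) ≤
      #(richColours F I c) * #Iᶜ + #{ℓ ∈ I | ℓ ∉ richColours F I c} * 4 :=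
    calc ∑ v ∈ matchingVerts I c, #(pendantColours F I c v)
        = ∑ ℓ ∈ I, ∑ v ∈ (c ℓ).toFinset, #(pendantColours F I c v) :=
          sum_biUnion hM.pairwiseDisjoint
      _ ≤ ∑ ℓ ∈ I, if ℓ ∈ richColours F I c then #Iᶜ else 4 :=
          sum_le_sum fun ℓ hℓ => hM.sum_card_pendantColours_le hF hdisj hℓ
      _ = _ := by rw [sum_ite, sum_const, sum_const, hK, smul_eq_mul, smul_eq_mul]
  have := hM.two_mul_sq_le_sum_card_pendantColours hF hsize
  rw [hK] at hsplit
  nlinarith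

theorem exists_ends_of_mem_richColours (hM : IsMaxRainbowMatching F I c)
    (hF : ∀ i, IsMatching (F i)) (hdisj : Pairwise (Disjoint on F)) {ℓ : ι}
    (hℓ : ℓ ∈ richColours F I c) :
    ∃ w ∈ c ℓ, 4 ≤ #(pendantColours F I c w) ∧
      ∃ v ∈ c ℓ, v ≠ w ∧ pendantColours F I c v = ∅ := by
  obtain ⟨hℓI, w, hw, h4⟩ := mem_richColours.1 hℓ
  have hv := Sym2.other_ne ((hF ℓ).not_isDiag _ (hM.mem ℓ hℓI)) hw
  refine ⟨w, hw, h4, _, Sym2.other_mem hw, hv, ?_⟩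
  exact hM.pendantColours_eq_empty hdisj hℓI hw (Sym2.other_mem hw) hv.symm (by omega)

/-- Otherwise the two rich edges could be exchanged for three edges. -/
theorem mk_notMem_of_pendantColours_eq_empty (hM : IsMaxRainbowMatching F I c)
    (hF : ∀ i, IsMatching (F i)) (hdisj : Pairwise (Disjoint on F)) {ℓ₁ ℓ₂ t : ι} {x y : V}
    (hℓ₁ : ℓ₁ ∈ richColours F I c) (hℓ₂ : ℓ₂ ∈ richColours F I c) (hx : x ∈ c ℓ₁)
    (hy : y ∈ c ℓ₂) (hSx : pendantColours F I c x = ∅) (hSy : pendantColours F I c y = ∅)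
    (ht : t ∉ I) : s(x, y) ∉ F t := by
  intro hxy
  have hℓ₁I := richColours_subset hℓ₁
  have hℓ₂I := richColours_subset hℓ₂
  obtain ⟨w₁, hw₁, h4₁, -⟩ := hM.exists_ends_of_mem_richColours hF hdisj hℓ₁
  obtain ⟨w₂, hw₂, h4₂, -⟩ := hM.exists_ends_of_mem_richColours hF hdisj hℓ₂
  have hxw₁ : x ≠ w₁ := by rintro rfl; simp [hSx] at h4₁
  have hyw₂ : y ≠ w₂ := by rintro rfl; simp [hSy] at h4₂
  have hℓ : ℓ₁ ≠ ℓ₂ := by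
    rintro rfl
    have hxy' : x ≠ y := fun h => (hF t).not_isDiag _ hxy (Sym2.mk_isDiag_iff.2 h)
    have hc : c ℓ₁ = s(x, y) := (Sym2.mem_and_mem_iff hxy').1 ⟨hx, hy⟩
    exact disjoint_left.1 (hdisj (ne_of_mem_of_not_mem hℓ₁I ht)) (hc ▸ hM.mem ℓ₁ hℓ₁I) hxy
  obtain ⟨i, hiS, hit⟩ := exists_mem_ne (by omega : 1 < #(pendantColours F I c w₁)) t
  obtain ⟨hiI, -, a, ha, hw₁a⟩ := mem_pendantColours.1 hiS
  have hX : #{t, i} + 2 ≤ #(pendantColours F I c w₂) := by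
    have := card_le_two (a := t) (b := i)
    omega
  obtain ⟨j, hjX, hjI, b, hb, hba, hw₂b⟩ := exists_pendant_ne hdisj a hX
  simp only [mem_insert, mem_singleton, not_or] at hjX
  exact hba (hM.cross_pendant_ends_eq hℓ₁I hℓ₂I hℓ hx hw₁ hxw₁ hy hw₂ hyw₂ ht hiI hjI
    (Ne.symm hit) (Ne.symm hjX.1) (Ne.symm hjX.2) ha hb hxy hw₁a hw₂b).symm

/-- The empty ends of the rich edges are at least as many as the rich edges, and every edge of a
missing colour `t` has an end in the matching that is not one of them. -/
theorem card_add_card_richColours_le (hM : IsMaxRainbowMatching F I c)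
    (hF : ∀ i, IsMatching (F i)) (hdisj : Pairwise (Disjoint on F)) {t : ι} (ht : t ∉ I) :
    #(F t) + #(richColours F I c) ≤ 2 * #I := by
  set W := matchingVerts I c
  set B := {v ∈ W | pendantColours F I c v = ∅ ∧ ∃ ℓ ∈ richColours F I c, v ∈ c ℓ}
  have hKB : #(richColours F I c) ≤ #B :=
    (hM.mono richColours_subset).pairwiseDisjoint.card_le_of_inter_nonempty fun ℓ hℓ => by
      obtain ⟨-, -, -, v, hv, -, hSv⟩ := hM.exists_ends_of_mem_richColours hF hdisj hℓ
      have hvW : v ∈ W := mem_matchingVerts.2 ⟨ℓ, richColours_subset hℓ, hv⟩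
      exact ⟨v, mem_inter.2 ⟨Sym2.mem_toFinset.2 hv, mem_filter.2 ⟨hvW, hSv, ℓ, hℓ, hv⟩⟩⟩
  have htB : #(F t) ≤ #(W \ B) :=
    (hF t).pairwiseDisjoint.card_le_of_inter_nonempty fun e he => by
      obtain ⟨x, hx, hxW⟩ := hM.exists_mem_matchingVerts ht he
      obtain ⟨y, rfl⟩ := Sym2.mem_iff_exists.1 hx
      by_cases hxB : x ∈ B
      · obtain ⟨-, hSx, ℓ₁, hℓ₁, hxℓ₁⟩ := mem_filter.1 hxB
        have hyW : y ∈ W := by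
          by_contra hyW
          have : t ∈ pendantColours F I c x := mem_pendantColours.2 ⟨ht, hxW, y, hyW, he⟩
          simp [hSx] at this
        refine ⟨y, mem_inter.2 ⟨by simp, mem_sdiff.2 ⟨hyW, fun hyB => ?_⟩⟩⟩
        obtain ⟨-, hSy, ℓ₂, hℓ₂, hyℓ₂⟩ := mem_filter.1 hyB
        exact hM.mk_notMem_of_pendantColours_eq_empty hF hdisj hℓ₁ hℓ₂ hxℓ₁ hyℓ₂ hSx hSy ht he
      · exact ⟨x, mem_inter.2 ⟨by simp, mem_sdiff.2 ⟨hxW, hxB⟩⟩⟩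
  have hBW : B ⊆ W := filter_subset _ _
  have hW : #W ≤ 2 * #I := card_matchingVerts_le I c
  have := card_le_card hBW
  rw [card_sdiff_of_subset hBW] at htB
  omega

/-- With `m` missing colours and `k` rich edges, `2m² ≤ km + 4(r - k)` and `k + m ≤ r`. -/
theorem three_mul_card_compl_le (hM : IsMaxRainbowMatching F I c) (hF : ∀ i, IsMatching (F i))
    (hdisj : Pairwise (Disjoint on F)) (hsize : ∀ i, Fintype.card ι ≤ #(F i)) :
    3 * #Iᶜ ≤ #I + 12 := by
  rcases Iᶜ.eq_empty_or_nonempty with hI | ⟨t, ht⟩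
  · simp [hI]
  have h₁ := hM.two_mul_sq_add_le hF hdisj hsize
  have h₂ := hM.card_add_card_richColours_le hF hdisj (mem_compl.1 ht)
  have h₃ := hsize t
  have h₄ := card_compl_add_card I
  have h₅ : #(richColours F I c) + #Iᶜ ≤ #I := by omega
  nlinarith

end IsMaxRainbowMatching

end RainbowMatching

/-- If `F₁, …, Fₙ` are pairwise disjoint matchings of size `n` in a graph
`G`, then there is a rainbow matching of size at least `(3/4)n - 9/2`. -/
theorem stmt_3 {V : Type*} (G : SimpleGraph V) (n : ℕ)
    (F : Fin n → Finset (Sym2 V))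
    (hedges : ∀ i, ∀ e ∈ F i, e ∈ G.edgeSet)
    (hmatch : ∀ i, ∀ e ∈ F i, ∀ f ∈ F i, e ≠ f → ∀ v, v ∈ e → v ∉ f)
    (hsize : ∀ i, (F i).card = n)
    (hdisj : ∀ i j, i ≠ j → Disjoint (F i) (F j)) :
    ∃ (I : Finset (Fin n)) (c : Fin n → Sym2 V),
      (∀ i ∈ I, c i ∈ F i) ∧
      (∀ i ∈ I, ∀ j ∈ I, i ≠ j → ∀ v, v ∈ c i → v ∉ c j) ∧
      (3 / 4 : ℝ) * n - 9 / 2 ≤ (I.card : ℝ) := by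
  classical
  obtain rfl | hn := n.eq_zero_or_pos
  · exact ⟨∅, finZeroElim, by simp, by simp, by norm_num⟩
  have : Nonempty V := by
    obtain ⟨e, -⟩ := card_pos.1 ((hsize ⟨0, hn⟩).symm ▸ hn)
    exact ⟨(Quot.out e).1⟩
  have hF : ∀ i, IsMatching (F i) := fun i =>
    ⟨fun e he => G.not_isDiag_of_mem_edgeSet (hedges i e he),
      fun e he f hf v hve hvf => by_contra fun hef => hmatch i e he f hf hef v hve hvf⟩
  obtain ⟨I, c, hM⟩ := exists_isMaxRainbowMatching F
  have key := hM.three_mul_card_compl_le hF (fun i j hij => hdisj i j hij)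
    fun i => (Fintype.card_fin n).trans_le (hsize i).ge
  rw [card_compl, Fintype.card_fin] at key
  have hIn : 3 * n ≤ 4 * #I + 12 := by
    have := card_le_univ I
    rw [Fintype.card_fin] at this
    omega
  refine ⟨I, c, hM.mem, hM.disjoint, ?_⟩
  have : (3 * n : ℝ) ≤ 4 * #I + 12 := by exact_mod_cast hIn
  linarith
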